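/- arXiv:math/0611421 — 2 statements merged into one kernel-verified Lean document; each statement's English description precedes it below -/
import Mathlib

section
/- For every integer n ≥ 3, the codimension h(n) = C(2n, n) - C(2n, n-2) - 1 - n(n+1)/2 of the first canonical embedding of Sp(n)/U(n) is not equal to n(n+1)/2 and not equal to n(n-1)/2. -/
/-!
Two steps of `C(N, k+1) (k+1) = C(N, k) (N-k)` give `(n+1)(n+2) C(2n, n-2) = n(n-1) C(2n, n)`,
so `(n+1)(n+2) (C(2n, n) - C(2n, n-2)) = (4n+2) C(2n, n)`. Bounding `C(2n, n)` below by `C(2n, 3)`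
shows that this difference is at least `n(n+1) + 2` once `n ≥ 3` (with equality at `n = 3`).
Hence the codimension exceeds `n(n+1)/2`, which is at least `n(n-1)/2`.
-/

namespace Nat

theorem choose_three_mul_six (n : ℕ) : choose n 3 * 6 = n * (n - 1) * (n - 2) := by
  rw [mul_comm, show 6 = 3 ! from rfl, ← descFactorial_eq_factorial_mul_choose]
  simp only [descFactorial_succ, descFactorial_zero, Nat.sub_zero]
  ring

theorem succ_mul_add_two_mul_choose_sub_two (n : ℕ) (hn : 2 ≤ n) :
    (n + 1) * (n + 2) * choose (2 * n) (n - 2) = n * (n - 1) * choose (2 * n) n := by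
  obtain ⟨k, rfl⟩ : ∃ k, n = k + 2 := ⟨n - 2, by omega⟩
  have lower := choose_succ_right_eq (2 * (k + 2)) k
  have upper := choose_succ_right_eq (2 * (k + 2)) (k + 1)
  rw [show 2 * (k + 2) - k = k + 4 by omega] at lower
  rw [show 2 * (k + 2) - (k + 1) = k + 3 by omega] at upper
  rw [show k + 2 - 2 = k by omega, show k + 2 - 1 = k + 1 by omega]
  calc (k + 2 + 1) * (k + 2 + 2) * choose (2 * (k + 2)) k
      = (k + 3) * (choose (2 * (k + 2)) k * (k + 4)) := by ring
    _ = (k + 1) * (choose (2 * (k + 2)) (k + 1) * (k + 3)) := by rw [← lower]; ring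
    _ = (k + 2) * (k + 1) * choose (2 * (k + 2)) (k + 2) := by rw [← upper]; ring

theorem choose_two_mul_sub_two_add_le (n : ℕ) (hn : 3 ≤ n) :
    choose (2 * n) (n - 2) + n * (n + 1) + 2 ≤ choose (2 * n) n := by
  have ratio := succ_mul_add_two_mul_choose_sub_two n (by omega)
  have middle : choose (2 * n) 3 ≤ choose (2 * n) n := by
    simpa using choose_le_middle 3 (2 * n)
  have cubic := choose_three_mul_six (2 * n)
  obtain ⟨m, rfl⟩ : ∃ m, n = m + 3 := ⟨n - 3, by omega⟩
  rw [show 2 * (m + 3) - 1 = 2 * m + 5 by omega, show 2 * (m + 3) - 2 = 2 * m + 4 by omega] at cubic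
  rw [show m + 3 - 2 = m + 1 by omega, show m + 3 - 1 = m + 2 by omega] at ratio
  rw [show m + 3 - 2 = m + 1 by omega]
  have quartic :
      (m + 4) * (m + 5) * ((m + 3) * (m + 4) + 2) ≤ (4 * m + 14) * choose (2 * (m + 3)) 3 := by
    refine le_of_mul_le_mul_left (a := 6) ?_ (by norm_num)
    calc 6 * ((m + 4) * (m + 5) * ((m + 3) * (m + 4) + 2))
        ≤ (4 * m + 14) * (2 * (m + 3) * (2 * m + 5) * (2 * m + 4)) := by
          ring_nf; nlinarith [Nat.zero_le (m ^ 2), Nat.zero_le (m ^ 3), Nat.zero_le (m ^ 4)]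
      _ = 6 * ((4 * m + 14) * choose (2 * (m + 3)) 3) := by rw [← cubic]; ring
  refine le_of_mul_le_mul_left (a := (m + 4) * (m + 5)) ?_ (by positivity)
  nlinarith [ratio, Nat.mul_le_mul_left (4 * m + 14) middle, quartic]

end Nat

theorem stmt_1 (n : ℕ) (hn : 3 ≤ n) :
    ((Nat.choose (2 * n) n : ℤ) - Nat.choose (2 * n) (n - 2) - 1 - n * (n + 1) / 2
        ≠ n * (n + 1) / 2) ∧
    ((Nat.choose (2 * n) n : ℤ) - Nat.choose (2 * n) (n - 2) - 1 - n * (n + 1) / 2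
        ≠ n * (n - 1) / 2) := by
  have bound : (Nat.choose (2 * n) (n - 2) : ℤ) + n * (n + 1) + 2 ≤ Nat.choose (2 * n) n := by
    exact_mod_cast Nat.choose_two_mul_sub_two_add_le n hn
  have mono : (n : ℤ) * (n - 1) ≤ n * (n + 1) := by nlinarith
  generalize (n : ℤ) * (n + 1) = a at bound mono ⊢
  generalize (n : ℤ) * (n - 1) = b at mono ⊢
  omega
end

section
/- For all integers a, b with 3 ≤ a ≤ b, the quantity C(a+b, b) - ab - 1 is not equal to any of: a(a+1)/2, a(a-1)/2, b(b+1)/2, b(b-1)/2, or ab. -/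
/-!
Since `3 ≤ a ≤ b`, `C(a+b, b) ≥ C(b+3, 3) ≥ 2b² + 2`, so `C(a+b, b) - ab - 1 > b²`,
while each of the five listed values is at most `b²`.
-/

lemma six_mul_choose_add_three_three (n : ℕ) :
    6 * (n + 3).choose 3 = (n + 1) * (n + 2) * (n + 3) := by
  have h := Nat.descFactorial_eq_factorial_mul_choose (n + 3) 3
  simp only [Nat.descFactorial_succ, Nat.reduceSubDiff, Nat.add_one_sub_one, tsub_zero,
    Nat.descFactorial_zero, mul_one, Nat.factorial, Nat.succ_eq_add_one, Nat.reduceAdd, zero_add,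
    Nat.reduceMul] at h
  rw [← h]
  ring

lemma two_mul_sq_add_two_le_choose_add_three_three {n : ℕ} (hn : 3 ≤ n) :
    2 * n ^ 2 + 2 ≤ (n + 3).choose 3 := by
  -- `(n+1)(n+2)(n+3) - 12(n² + 1) = (n-1)(n-2)(n-3)`
  have h : 6 * (2 * n ^ 2 + 2) ≤ 6 * (n + 3).choose 3 := by
    rw [six_mul_choose_add_three_three]
    nlinarith [Nat.mul_le_mul_right (n * n) hn]
  omega

lemma sq_lt_choose_add_sub_mul_sub_one {a b : ℕ} (ha : 3 ≤ a) (hab : a ≤ b) :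
    (b : ℤ) ^ 2 < (a + b).choose b - a * b - 1 := by
  have hchoose : 2 * b ^ 2 + 2 ≤ (a + b).choose b :=
    calc 2 * b ^ 2 + 2 ≤ (b + 3).choose 3 :=
          two_mul_sq_add_two_le_choose_add_three_three (ha.trans hab)
      _ = (3 + b).choose b := by rw [add_comm, Nat.choose_symm_add]
      _ ≤ (a + b).choose b := Nat.choose_le_choose b (by omega)
  have hchooseZ : 2 * (b : ℤ) ^ 2 + 2 ≤ (a + b).choose b := by exact_mod_cast hchoose
  have hmul : (a : ℤ) * b ≤ b ^ 2 := by
    rw [sq]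
    exact mul_le_mul_of_nonneg_right (by exact_mod_cast hab) b.cast_nonneg
  linarith

lemma mul_add_one_ediv_two_le_sq {x y : ℤ} (hx : 0 ≤ x) (hxy : x ≤ y) :
    x * (x + 1) / 2 ≤ y ^ 2 :=
  Int.ediv_le_of_le_mul two_pos (by nlinarith [Int.le_self_sq y])

lemma mul_sub_one_ediv_two_le_sq {x y : ℤ} (hx : 0 ≤ x) (hxy : x ≤ y) :
    x * (x - 1) / 2 ≤ y ^ 2 :=
  Int.ediv_le_of_le_mul two_pos (by nlinarith)

theorem stmt_3 (a b : ℕ) (ha : 3 ≤ a) (hab : a ≤ b) :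
    ((Nat.choose (a + b) b : ℤ) - a * b - 1 ≠ a * (a + 1) / 2) ∧
    ((Nat.choose (a + b) b : ℤ) - a * b - 1 ≠ a * (a - 1) / 2) ∧
    ((Nat.choose (a + b) b : ℤ) - a * b - 1 ≠ b * (b + 1) / 2) ∧
    ((Nat.choose (a + b) b : ℤ) - a * b - 1 ≠ b * (b - 1) / 2) ∧
    ((Nat.choose (a + b) b : ℤ) - a * b - 1 ≠ a * b) := by
  have hlt := sq_lt_choose_add_sub_mul_sub_one ha hab
  have ha₀ : (0 : ℤ) ≤ a := a.cast_nonneg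
  have hb₀ : (0 : ℤ) ≤ b := b.cast_nonneg
  have hab' : (a : ℤ) ≤ b := by exact_mod_cast hab
  refine ⟨?_, ?_, ?_, ?_, ?_⟩ <;> refine (lt_of_le_of_lt ?_ hlt).ne'
  · exact mul_add_one_ediv_two_le_sq ha₀ hab'
  · exact mul_sub_one_ediv_two_le_sq ha₀ hab'
  · exact mul_add_one_ediv_two_le_sq hb₀ le_rfl
  · exact mul_sub_one_ediv_two_le_sq hb₀ le_rfl
  · rw [sq]
    exact mul_le_mul_of_nonneg_right hab' hb₀
end
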